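/- arXiv:1705.04500 — 12 statements merged into one kernel-verified Lean document; each statement's English description precedes it below -/
import Mathlib

section
/- Let P and S be sets with maps ι, τ : P → S, an associative partial composition defined on pairs (α₂, α₁) with ι(α₂) ≠ τ(α₁) satisfying ι(α₂α₁) = ι(α₁) and τ(α₂α₁) = τ(α₂), and an inversion α ↦ α⁻¹ with ι(α⁻¹) = τ(α) and τ(α⁻¹) = ι(α). Assume that for all α₁, α₂, α₃ ∈ P, either |ι({α₁,α₂,α₃})| ≤ 2 or |τ({α₁,α₂,α₃})| ≤ 2. If |ι(P)| ≥ 3 and |τ(P)| ≥ 3, then there exists a unique s ∈ S such that s ∈ {ι(α), τ(α)} for every α ∈ P. -/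
private lemma stmt0_lemM {P S : Type} (ι τ : P → S) (inv : P → P)
    (hinvι : ∀ a, ι (inv a) = τ a) (hinvτ : ∀ a, τ (inv a) = ι a)
    (htriple : ∀ a b c : P,
      (ι a = ι b ∨ ι a = ι c ∨ ι b = ι c) ∨ (τ a = τ b ∨ τ a = τ c ∨ τ b = τ c))
    (x y : P) (hxy : ι x ≠ ι y) (ht : τ x = τ y)
    (hsx : τ x ≠ ι x) (hsy : τ x ≠ ι y) :
    ∀ a, ι a = τ x ∨ τ a = τ x := by
  intro a
  by_contra h
  push_neg at h
  obtain ⟨ha1, ha2⟩ := h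
  have C1 := htriple (inv x) y a
  rw [hinvι, hinvτ] at C1
  have C2 := htriple x (inv y) a
  rw [hinvι, hinvτ] at C2
  have D1 : ι y = ι a ∨ ι x = τ a := by
    rcases C1 with (h|h|h)|(h|h|h)
    · exact absurd h hsy
    · exact absurd h.symm ha1
    · exact Or.inl h
    · exact absurd (h.trans ht.symm).symm hsx
    · exact Or.inr h
    · exact absurd (ht.trans h).symm ha2
  have D2 : ι x = ι a ∨ ι y = τ a := by
    rcases C2 with (h|h|h)|(h|h|h)
    · exact absurd (h.trans ht.symm).symm hsx
    · exact Or.inl h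
    · exact absurd (ht.trans h).symm ha1
    · exact absurd h hsy
    · exact absurd h.symm ha2
    · exact Or.inr h
  rcases D1 with h1 | h1 <;> rcases D2 with h2 | h2
  · exact hxy (h2.trans h1.symm)
  · -- ι a = ι y and τ a = ι y : loop at ι y, contradict htriple a x (inv x)
    have C3 := htriple a x (inv x)
    rw [hinvι, hinvτ] at C3
    rcases C3 with (h|h|h)|(h|h|h)
    · exact absurd (h1.trans h).symm hxy
    · exact absurd h ha1
    · exact absurd h.symm hsx
    · exact absurd h ha2
    · exact absurd (h2.trans h).symm hxy
    · exact absurd h hsx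
  · -- ι a = ι x and τ a = ι x : loop at ι x, contradict htriple a y (inv y)
    have C4 := htriple a y (inv y)
    rw [hinvι, hinvτ] at C4
    rcases C4 with (h|h|h)|(h|h|h)
    · exact absurd (h2.trans h) hxy
    · exact absurd (h.trans ht.symm) ha1
    · exact absurd (ht.trans h.symm) hsy
    · exact absurd (h.trans ht.symm) ha2
    · exact absurd (h1.trans h) hxy
    · exact absurd (ht.trans h) hsy
  · exact hxy (h1.trans h2.symm)

private lemma stmt0_lemTop {P S : Type} (ι τ : P → S) (inv : P → P)
    (hinvι : ∀ a, ι (inv a) = τ a) (hinvτ : ∀ a, τ (inv a) = ι a)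
    (htriple : ∀ a b c : P,
      (ι a = ι b ∨ ι a = ι c ∨ ι b = ι c) ∨ (τ a = τ b ∨ τ a = τ c ∨ τ b = τ c))
    (p q r : P) (hpq : ι p ≠ ι q) (hpr : ι p ≠ ι r) (hqr : ι q ≠ ι r)
    (ht : τ p = τ q) :
    ∃ s : S, ∀ a, ι a = s ∨ τ a = s := by
  by_cases hsp : τ p = ι p
  · have hsq : τ p ≠ ι q := fun h => hpq (hsp.symm.trans h)
    by_cases h1 : τ r = τ p
    · exact ⟨τ q, stmt0_lemM ι τ inv hinvι hinvτ htriple q r hqr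
        (ht.symm.trans h1.symm).symm.symm
        (fun h => hsq (ht.trans h))
        (fun h => hpr (hsp.symm.trans (ht.trans h)))⟩
    · by_cases h2 : τ r = ι q
      · exact ⟨τ (inv q), stmt0_lemM ι τ inv hinvι hinvτ htriple (inv q) r
          (by rw [hinvι]; exact fun h => hpr (hsp.symm.trans (ht.trans h)))
          (by rw [hinvτ]; exact h2.symm)
          (by rw [hinvτ, hinvι]; exact fun h => hsq (ht.trans h.symm))
          (by rw [hinvτ]; exact hqr)⟩
      · exfalso
        have C := htriple q (inv q) r
        rw [hinvι, hinvτ] at C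
        rcases C with (h|h|h)|(h|h|h)
        · exact hsq (ht.trans h.symm)
        · exact hqr h
        · exact hpr (hsp.symm.trans (ht.trans h))
        · exact hsq (ht.trans h)
        · exact h1 (h.symm.trans ht.symm)
        · exact h2 h.symm
  · by_cases hsq : τ p = ι q
    · by_cases h1 : τ r = τ p
      · exact ⟨τ p, stmt0_lemM ι τ inv hinvι hinvτ htriple p r hpr h1.symm hsp
          (fun h => hqr (hsq.symm.trans h))⟩
      · by_cases h2 : τ r = ι p
        · exact ⟨τ (inv p), stmt0_lemM ι τ inv hinvι hinvτ htriple (inv p) r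
            (by rw [hinvι]; exact fun h => hqr (hsq.symm.trans h))
            (by rw [hinvτ]; exact h2.symm)
            (by rw [hinvτ, hinvι]; exact fun h => hsp h.symm)
            (by rw [hinvτ]; exact hpr)⟩
        · exfalso
          have C := htriple p (inv p) r
          rw [hinvι, hinvτ] at C
          rcases C with (h|h|h)|(h|h|h)
          · exact hsp h.symm
          · exact hpr h
          · exact hqr (hsq.symm.trans h)
          · exact hsp h
          · exact h1 h.symm
          · exact h2 h.symm
    · exact ⟨τ p, stmt0_lemM ι τ inv hinvι hinvτ htriple p q hpq ht hsp hsq⟩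

/-- combinatorial lemma on sets `P`, `S` with maps `ι, τ : P → S`,
an associative partial composition defined when `ι α₂ ≠ τ α₁`, and an inversion.
If every triple has at most two distinct `ι`-values or at most two distinct `τ`-values,
and both `ι(P)` and `τ(P)` have at least three elements, then there is a unique `s ∈ S`
lying in `{ι(α), τ(α)}` for every `α ∈ P`. -/
theorem stmt0 {P S : Type} (ι τ : P → S)
    (comp : ∀ a₂ a₁ : P, ι a₂ ≠ τ a₁ → P)
    (hcompι : ∀ a₂ a₁ h, ι (comp a₂ a₁ h) = ι a₁)
    (hcompτ : ∀ a₂ a₁ h, τ (comp a₂ a₁ h) = τ a₂)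
    (hassoc : ∀ (a₃ a₂ a₁ : P) (h₁ : ι a₂ ≠ τ a₁) (h₂ : ι a₃ ≠ τ a₂)
      (h₃ : ι a₃ ≠ τ (comp a₂ a₁ h₁)) (h₄ : ι (comp a₃ a₂ h₂) ≠ τ a₁),
      comp a₃ (comp a₂ a₁ h₁) h₃ = comp (comp a₃ a₂ h₂) a₁ h₄)
    (inv : P → P)
    (hinvι : ∀ a, ι (inv a) = τ a) (hinvτ : ∀ a, τ (inv a) = ι a)
    (htriple : ∀ a b c : P,
      (ι a = ι b ∨ ι a = ι c ∨ ι b = ι c) ∨ (τ a = τ b ∨ τ a = τ c ∨ τ b = τ c))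
    (hι3 : ∃ a b c : P, ι a ≠ ι b ∧ ι a ≠ ι c ∧ ι b ≠ ι c)
    (hτ3 : ∃ a b c : P, τ a ≠ τ b ∧ τ a ≠ τ c ∧ τ b ≠ τ c) :
    ∃! s : S, ∀ a : P, s = ι a ∨ s = τ a := by
  obtain ⟨x, y, z, h1, h2, h3⟩ := hι3
  have hex : ∃ s : S, ∀ a, ι a = s ∨ τ a = s := by
    rcases htriple x y z with (h|h|h)|(h|h|h)
    · exact absurd h h1
    · exact absurd h h2
    · exact absurd h h3
    · exact stmt0_lemTop ι τ inv hinvι hinvτ htriple x y z h1 h2 h3 h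
    · exact stmt0_lemTop ι τ inv hinvι hinvτ htriple x z y h2 h1 h3.symm h
    · exact stmt0_lemTop ι τ inv hinvι hinvτ htriple y z x h3 h1.symm h2.symm h
  obtain ⟨s, hs⟩ := hex
  refine ⟨s, fun a => (hs a).imp Eq.symm Eq.symm, ?_⟩
  intro s' hs'
  by_contra hne
  have key : ∀ a, ι a = s ∨ ι a = s' := by
    intro a
    rcases hs a with h | h
    · exact Or.inl h
    · rcases hs' a with h' | h'
      · exact Or.inr h'.symm
      · exact absurd (h'.trans h) hne
  rcases key x with hx | hx <;> rcases key y with hy | hy <;>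
    rcases key z with hz | hz <;>
    first
      | exact absurd (hx.trans hy.symm) h1
      | exact absurd (hx.trans hz.symm) h2
      | exact absurd (hy.trans hz.symm) h3
end

section
/- Let m ≥ 2 and n ≥ 1 be integers and let M be the commutative monoid presented by generators u, v and the relation u + v = m·u + n·v. Then M does not satisfy pseudo-cancellation: setting a = (m−1)·u, b = v, c = u, one has a + c ≤ b + c, but there is no a₁ ∈ M with a₁ + c ≤ c and a ≤ b + a₁. -/
/-!
Both sides of `u + v = m·u + n·v` have degree at least `2`, so the relation never applies to
an element of degree at most `1`: in `M` the classes of `0`, `u` and `v` are singletons. Hence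
`a₁ + u ≤ u` forces `a₁ = 0`, and then `(m-1)·u ≤ v` is impossible since `m - 1 ≥ 1`.
-/

/-- The congruence on `ℕ × ℕ` (the free commutative monoid on generators
`u = (1,0)` and `v = (0,1)`) generated by the relation `u + v = m·u + n·v`. -/
def conUV (m n : ℕ) : AddCon (ℕ × ℕ) :=
  addConGen (fun a b => a = ((1, 1) : ℕ × ℕ) ∧ b = ((m, n) : ℕ × ℕ))

namespace AddCon

variable {M : Type*} [AddCommMonoid M]

def identifyDegreeGE (deg : M →+ ℕ) (k : ℕ) : AddCon M where
  r a b := a = b ∨ (k ≤ deg a ∧ k ≤ deg b)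
  iseqv :=
    ⟨fun _ => Or.inl rfl, by rintro a b (rfl | h) <;> tauto, by
      rintro a b c (rfl | h) (rfl | h') <;> tauto⟩
  add' := by
    rintro a b c d (rfl | h) (rfl | h')
    · exact Or.inl rfl
    all_goals right; simp only [map_add]; omega

theorem eq_of_identifyDegreeGE {deg : M →+ ℕ} {k : ℕ} {a b : M}
    (h : identifyDegreeGE deg k a b) (hb : deg b < k) : a = b :=
  h.resolve_right fun h' => hb.not_ge h'.2

end AddCon

abbrev totalDegree : ℕ × ℕ →+ ℕ := (AddMonoidHom.id ℕ).coprod (AddMonoidHom.id ℕ)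

theorem conUV_le_identifyDegreeGE {m n : ℕ} (hmn : 2 ≤ m + n) :
    conUV m n ≤ AddCon.identifyDegreeGE totalDegree 2 := by
  refine AddCon.addConGen_le.mpr ?_
  rintro a b ⟨rfl, rfl⟩
  exact Or.inr ⟨le_rfl, hmn⟩

theorem eq_of_conUV_mk'_eq {m n : ℕ} (hmn : 2 ≤ m + n) {a b : ℕ × ℕ}
    (h : (conUV m n).mk' a = (conUV m n).mk' b) (hb : b.1 + b.2 ≤ 1) : a = b :=
  AddCon.eq_of_identifyDegreeGE (conUV_le_identifyDegreeGE hmn ((conUV m n).eq.mp h)) <| by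
    simpa [AddMonoidHom.coprod_apply] using Nat.lt_succ_of_le hb

theorem stmt2_general (m n : ℕ) (hm : 2 ≤ m) :
    (∃ x : (conUV m n).Quotient,
        ((m - 1) • ((conUV m n).mk' (1, 0)) + (conUV m n).mk' (1, 0)) + x
          = (conUV m n).mk' (0, 1) + (conUV m n).mk' (1, 0)) ∧
    ¬ ∃ a₁ : (conUV m n).Quotient,
        (∃ x, (a₁ + (conUV m n).mk' (1, 0)) + x = (conUV m n).mk' (1, 0)) ∧
        (∃ y, (m - 1) • ((conUV m n).mk' (1, 0)) + y = (conUV m n).mk' (0, 1) + a₁) := by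
  set c := conUV m n
  have hmn : 2 ≤ m + n := by omega
  constructor
  · refine ⟨c.mk' (0, n), ?_⟩
    have hlhs : (m - 1) • ((1, 0) : ℕ × ℕ) + (1, 0) + (0, n) = (m, n) := by
      simp only [Prod.smul_mk, smul_eq_mul, mul_one, mul_zero, Prod.mk_add_mk, add_zero,
        zero_add, Nat.sub_add_cancel (by omega : 1 ≤ m)]
    simp only [← map_nsmul, ← map_add, hlhs]
    exact c.eq.mpr (c.symm (AddConGen.Rel.of _ _ ⟨rfl, rfl⟩))
  · rintro ⟨a₁, ⟨x, hx⟩, y, hy⟩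
    obtain ⟨a, rfl⟩ := c.mk'_surjective a₁
    obtain ⟨x, rfl⟩ := c.mk'_surjective x
    obtain ⟨y, rfl⟩ := c.mk'_surjective y
    simp only [← map_nsmul, ← map_add] at hx hy
    have hax := eq_of_conUV_mk'_eq hmn hx (by simp)
    have ha : a = 0 := by
      simp only [Prod.ext_iff, Prod.fst_add, Prod.snd_add] at hax
      ext <;> simp only [Prod.fst_zero, Prod.snd_zero] <;> omega
    subst ha
    have hy1 := congrArg Prod.fst (eq_of_conUV_mk'_eq hmn hy (by simp))
    simp only [Prod.smul_mk, smul_eq_mul, mul_one, Prod.fst_add, add_zero,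
      Nat.add_eq_zero_iff] at hy1
    omega

/-- For `m ≥ 2`, `n ≥ 1`, the monoid `⟨u, v ∣ u + v = m·u + n·v⟩`
does not satisfy pseudo-cancellation: with `a = (m-1)·u`, `b = v`, `c = u`,
one has `a + c ≤ b + c`, but there is no `a₁` with `a₁ + c ≤ c` and `a ≤ b + a₁`. -/
theorem stmt2 (m n : ℕ) (hm : 2 ≤ m) (hn : 1 ≤ n) :
    (∃ x : (conUV m n).Quotient,
        ((m - 1) • ((conUV m n).mk' (1, 0)) + (conUV m n).mk' (1, 0)) + x
          = (conUV m n).mk' (0, 1) + (conUV m n).mk' (1, 0)) ∧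
    ¬ ∃ a₁ : (conUV m n).Quotient,
        (∃ x, (a₁ + (conUV m n).mk' (1, 0)) + x = (conUV m n).mk' (1, 0)) ∧
        (∃ y, (m - 1) • ((conUV m n).mk' (1, 0)) + y = (conUV m n).mk' (0, 1) + a₁) :=
  stmt2_general m n hm
end

section
/- In the commutative monoid M presented by generators u, v and the relation u + v = m·u + n·v (with m ≥ 2, n ≥ 1), the inequality (m−1)·u ≤ v fails. -/
section

variable {M : Type*} [AddCommMonoid M] [Subsingleton (AddUnits M)] {p : M}

theorem AddIrreducible.add_eq_iff (hp : AddIrreducible p) {x y : M} :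
    x + y = p ↔ x = 0 ∧ y = p ∨ x = p ∧ y = 0 := by
  constructor
  · intro h
    rcases (h ▸ hp).eq_zero_or_eq_zero with rfl | rfl <;> simp_all
  · rintro (⟨rfl, rfl⟩ | ⟨rfl, rfl⟩) <;> simp

def AddIrreducible.addCon (hp : AddIrreducible p) : AddCon M where
  r x y := (x = p ↔ y = p) ∧ (x = 0 ↔ y = 0)
  iseqv :=
    ⟨fun _ => ⟨Iff.rfl, Iff.rfl⟩, fun h => ⟨h.1.symm, h.2.symm⟩,
      fun h₁ h₂ => ⟨h₁.1.trans h₂.1, h₁.2.trans h₂.2⟩⟩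
  add' {w x y z} h₁ h₂ := by
    refine ⟨?_, ?_⟩
    · rw [hp.add_eq_iff, hp.add_eq_iff, h₁.1, h₁.2, h₂.1, h₂.2]
    · rw [add_eq_zero, add_eq_zero, h₁.2, h₂.2]

theorem AddIrreducible.eq_of_addConGen_rel (hp : AddIrreducible p) {r : M → M → Prop}
    (hr : ∀ x y, r x y → (x = p ↔ y = p) ∧ (x = 0 ↔ y = 0)) {x : M}
    (hx : addConGen r x p) : x = p :=
  ((AddCon.addConGen_le.mpr hr : addConGen r ≤ hp.addCon) hx).1.mpr rfl

end

theorem addIrreducible_zero_one : AddIrreducible ((0, 1) : ℕ × ℕ) where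
  not_isAddUnit := by simp [Prod.ext_iff]
  isAddUnit_or_isAddUnit a b h := by
    simp only [isAddUnit_iff_eq_zero, Prod.ext_iff] at h ⊢
    simp only [Prod.fst_add, Prod.snd_add, Prod.fst_zero, Prod.snd_zero] at h ⊢
    omega

theorem stmt3_general (m n : ℕ) (hm : 2 ≤ m) :
    ¬ ∃ x : (conUV m n).Quotient,
        (m - 1) • ((conUV m n).mk' (1, 0)) + x = (conUV m n).mk' (0, 1) := by
  rintro ⟨x, hx⟩
  obtain ⟨a, rfl⟩ := AddCon.mk'_surjective x
  rw [← map_nsmul, ← map_add] at hx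
  have hv := addIrreducible_zero_one.eq_of_addConGen_rel ?hr ((conUV m n).eq.mp hx)
  case hr =>
    rintro _ _ ⟨rfl, rfl⟩
    simp only [Prod.ext_iff, Prod.fst_zero, Prod.snd_zero]
    omega
  simp only [Prod.ext_iff, Prod.fst_add, Prod.smul_fst, smul_eq_mul] at hv
  omega

/-- In the monoid `⟨u, v ∣ u + v = m·u + n·v⟩` with `m ≥ 2`, `n ≥ 1`,
the inequality `(m-1)·u ≤ v` fails in the algebraic preorder. -/
theorem stmt3 (m n : ℕ) (hm : 2 ≤ m) (hn : 1 ≤ n) :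
    ¬ ∃ x : (conUV m n).Quotient,
        (m - 1) • ((conUV m n).mk' (1, 0)) + x = (conUV m n).mk' (0, 1) :=
  stmt3_general m n hm
end

section
/- Let G be a discrete group acting partially on a locally compact Hausdorff space Ω (a family of homeomorphisms θ_g : Ω_{g⁻¹} → Ω_g between open subsets satisfying the partial action axioms). If θ admits a topological Følner net, then θ is topologically amenable, i.e. it admits a topological approximate invariant mean. Concretely: given a net of locally constant maps F_i : Ω → (nonempty finite subsets of G) with F_i^x ⊆ G^x for all x, and sup_{x∈K} |F_i^x·g⁻¹ \ F_i^{θ_g(x)}| / |F_i^x| → 0 for every g ∈ G and compact K ⊆ Ω_{g⁻¹}, the normalized characteristic functions m_i^x := |F_i^x|⁻¹·1_{F_i^x} form a topological approximate invariant mean. -/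
/-- A topological partial action of a discrete group `G` on a topological space `Ω`:
a family of homeomorphisms `θ_g : Ω_{g⁻¹} → Ω_g` between open subsets (encoded by
total maps `act g` together with their domains) satisfying the partial action axioms. -/
structure TopPartialAction (G Ω : Type) [Group G] [TopologicalSpace Ω] where
  dom : G → Set Ω
  isOpen_dom : ∀ g, IsOpen (dom g)
  act : G → Ω → Ω
  mapsTo : ∀ g x, x ∈ dom g⁻¹ → act g x ∈ dom g
  continuousOn : ∀ g, ContinuousOn (act g) (dom g⁻¹)
  act_inv : ∀ g x, x ∈ dom g⁻¹ → act g⁻¹ (act g x) = x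
  dom_mul : ∀ g h x, x ∈ dom g⁻¹ → x ∈ dom h → act g x ∈ dom (g * h)
  act_mul : ∀ g h x, x ∈ dom h⁻¹ → x ∈ dom (h⁻¹ * g⁻¹) →
    act g (act h x) = act (g * h) x

/-- `m` is a topological approximate invariant mean for the partial action `θ`:
a net of families of probability measures `m i x ∈ Prob(G)` supported on
`G^x = {g : x ∈ Ω_{g⁻¹}}`, with `x ↦ m i x g` continuous on `Ω_{g⁻¹}`, and
`sup_{x ∈ K} ‖g.(m i x) − m i (θ_g x)‖₁ → 0` for every `g ∈ G` and every
compact `K ⊆ Ω_{g⁻¹}` (where `(g.μ)(h) = μ(hg)`). -/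
def IsTAIMean {G Ω I : Type} [Group G] [TopologicalSpace Ω] [Preorder I]
    (θ : TopPartialAction G Ω) (m : I → Ω → G → ℝ) : Prop :=
  (∀ i x g, 0 ≤ m i x g) ∧
  (∀ i x g, m i x g ≠ 0 → x ∈ θ.dom g⁻¹) ∧
  (∀ i x, HasSum (m i x) 1) ∧
  (∀ i g, ContinuousOn (fun x => m i x g) (θ.dom g⁻¹)) ∧
  (∀ g : G, ∀ K ⊆ θ.dom g⁻¹, IsCompact K → ∀ ε > (0 : ℝ),
    ∀ᶠ i in Filter.atTop, ∀ x ∈ K,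
      ∑' h : G, |m i x (h * g) - m i (θ.act g x) h| < ε)

/-- if a partial action of a discrete group on a locally compact
Hausdorff space admits a topological Følner net `(F_i)`, then the normalized
characteristic functions `m_i^x = |F_i^x|⁻¹ · 1_{F_i^x}` form a topological
approximate invariant mean; in particular the action is topologically amenable. -/
theorem stmt4 {G Ω I : Type} [Group G] [DecidableEq G]
    [TopologicalSpace Ω] [T2Space Ω] [LocallyCompactSpace Ω]
    [Preorder I] [Nonempty I] [IsDirected I (· ≤ ·)]
    (θ : TopPartialAction G Ω) (F : I → Ω → Finset G)
    (hne : ∀ i x, (F i x).Nonempty)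
    (hlc : ∀ i, IsLocallyConstant (F i))
    (hsub : ∀ i x, ∀ g ∈ F i x, x ∈ θ.dom g⁻¹)
    (hfolner : ∀ g : G, ∀ K ⊆ θ.dom g⁻¹, IsCompact K → ∀ ε > (0 : ℝ),
      ∀ᶠ i in Filter.atTop, ∀ x ∈ K,
        ((((F i x).image (· * g⁻¹)) \ F i (θ.act g x)).card : ℝ) / ((F i x).card : ℝ) < ε) :
    IsTAIMean θ (fun i x g => if g ∈ F i x then ((F i x).card : ℝ)⁻¹ else 0) := by
  have hcardpos : ∀ i x, (0:ℝ) < ((F i x).card : ℝ) := fun i x => by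
    exact_mod_cast Finset.card_pos.mpr (hne i x)
  refine ⟨?_, ?_, ?_, ?_, ?_⟩
  · intro i x g
    dsimp only
    split
    · exact inv_nonneg.mpr (hcardpos i x).le
    · exact le_refl 0
  · intro i x g h
    dsimp only at h
    by_cases hg : g ∈ F i x
    · exact hsub i x g hg
    · simp [hg] at h
  · intro i x
    have h1 : HasSum (fun g => if g ∈ F i x then ((F i x).card:ℝ)⁻¹ else 0)
        (∑ g ∈ F i x, if g ∈ F i x then ((F i x).card:ℝ)⁻¹ else 0) :=
      hasSum_sum_of_ne_finset_zero (fun b hb => if_neg hb)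
    have h2 : (∑ g ∈ F i x, if g ∈ F i x then ((F i x).card:ℝ)⁻¹ else 0) = 1 := by
      rw [Finset.sum_congr rfl (fun b hb => if_pos hb), Finset.sum_const, nsmul_eq_mul,
        mul_inv_cancel₀ (hcardpos i x).ne']
    rwa [h2] at h1
  · intro i g
    have : IsLocallyConstant (fun x => if g ∈ F i x then ((F i x).card:ℝ)⁻¹ else 0) :=
      (hlc i).comp (fun s : Finset G => if g ∈ s then ((s.card : ℕ) : ℝ)⁻¹ else 0)
    exact this.continuous.continuousOn
  · intro g K hK hKc ε hε
    have hK' : IsCompact (θ.act g '' K) := hKc.image_of_continuousOn ((θ.continuousOn g).mono hK)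
    have hK'sub : θ.act g '' K ⊆ θ.dom g⁻¹⁻¹ := by
      rintro _ ⟨x, hx, rfl⟩
      rw [inv_inv]
      exact θ.mapsTo g x (hK hx)
    have h1 := hfolner g K hK hKc (ε/4) (by linarith)
    have h2 := hfolner g⁻¹ (θ.act g '' K) hK'sub hK' (ε/4) (by linarith)
    filter_upwards [h1, h2] with i hi1 hi2 x hx
    have hi2' := hi2 (θ.act g x) ⟨x, hx, rfl⟩
    rw [θ.act_inv g x (hK hx), inv_inv] at hi2'
    set y := θ.act g x with hy
    set A := F i x with hA
    set B := F i y with hB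
    set A' := A.image (· * g⁻¹) with hA'
    set a : ℝ := (A.card : ℝ) with haA
    set b : ℝ := (B.card : ℝ) with hbB
    have hapos : (0:ℝ) < a := hcardpos i x
    have hbpos : (0:ℝ) < b := hcardpos i y
    have hA'card : (A'.card : ℝ) = a := by
      rw [hA', Finset.card_image_of_injective _ (mul_left_injective g⁻¹)]
    have hmem : ∀ h : G, h * g ∈ A ↔ h ∈ A' := by
      intro h
      constructor
      · intro hh
        exact Finset.mem_image.mpr ⟨h * g, hh, by group⟩
      · intro hh
        obtain ⟨c, hc, rfl⟩ := Finset.mem_image.mp hh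
        simpa using hc
    -- identify c2 with the Følner quantity for g⁻¹
    have himg : (B \ A').image (· * g) = B.image (· * g) \ A := by
      rw [Finset.image_sdiff _ _ (mul_left_injective g), hA', Finset.image_image]
      congr 1
      have : ((· * g) ∘ (· * g⁻¹)) = (id : G → G) := by
        funext z; simp
      rw [this, Finset.image_id]
    have hc2eq : ((B \ A').card : ℝ) = ((B.image (· * g) \ A).card : ℝ) := by
      rw [← himg, Finset.card_image_of_injective _ (mul_left_injective g)]
    set c1 : ℝ := ((A' \ B).card : ℝ) with hc1
    set c2 : ℝ := ((B \ A').card : ℝ) with hc2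
    set c3 : ℝ := ((A' ∩ B).card : ℝ) with hc3
    have hd1 : c1 / a < ε / 4 := hi1 x hx
    have hd2 : c2 / b < ε / 4 := by rw [hc2eq]; exact hi2'
    have hsum1 : c1 + c3 = a := by
      rw [hc1, hc3, ← hA'card]
      exact_mod_cast Finset.card_sdiff_add_card_inter A' B
    have hsum2 : c2 + c3 = b := by
      have := Finset.card_sdiff_add_card_inter B A'
      rw [Finset.inter_comm] at this
      rw [hc2, hc3, hbB]
      exact_mod_cast this
    have hc1nn : 0 ≤ c1 := by positivity
    have hc2nn : 0 ≤ c2 := by positivity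
    have hc3nn : 0 ≤ c3 := by positivity
    -- compute the tsum as a finite sum
    have hzero : ∀ h ∉ A' ∪ B,
        |(if h * g ∈ A then a⁻¹ else 0) - (if h ∈ B then b⁻¹ else 0)| = 0 := by
      intro h hh
      rw [Finset.mem_union] at hh
      push_neg at hh
      rw [if_neg (fun hc => hh.1 ((hmem h).mp hc)), if_neg hh.2, sub_zero, abs_zero]
    have hts : (∑' h : G, |(if h * g ∈ A then a⁻¹ else 0) - (if h ∈ B then b⁻¹ else 0)|)
        = ∑ h ∈ A' ∪ B, |(if h * g ∈ A then a⁻¹ else 0) - (if h ∈ B then b⁻¹ else 0)| :=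
      tsum_eq_sum hzero
    have hunion : A' ∪ B = ((A' \ B) ∪ (A' ∩ B)) ∪ (B \ A') := by
      rw [Finset.sdiff_union_inter, Finset.union_sdiff_self_eq_union]
    have hdisj1 : Disjoint (A' \ B) (A' ∩ B) := Finset.disjoint_sdiff_inter A' B
    have hdisj2 : Disjoint ((A' \ B) ∪ (A' ∩ B)) (B \ A') := by
      rw [Finset.sdiff_union_inter]
      exact Finset.disjoint_sdiff
    have hS1 : (∑ h ∈ A' \ B, |(if h * g ∈ A then a⁻¹ else 0) - (if h ∈ B then b⁻¹ else 0)|)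
        = c1 * a⁻¹ := by
      have e : ∀ h ∈ A' \ B,
          |(if h * g ∈ A then a⁻¹ else 0) - (if h ∈ B then b⁻¹ else 0)| = a⁻¹ := by
        intro h hh
        rw [Finset.mem_sdiff] at hh
        rw [if_pos ((hmem h).mpr hh.1), if_neg hh.2, sub_zero,
          abs_of_nonneg (inv_nonneg.mpr hapos.le)]
      rw [Finset.sum_congr rfl e, Finset.sum_const, nsmul_eq_mul, ← hc1]
    have hS2 : (∑ h ∈ A' ∩ B, |(if h * g ∈ A then a⁻¹ else 0) - (if h ∈ B then b⁻¹ else 0)|)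
        = c3 * |a⁻¹ - b⁻¹| := by
      have e : ∀ h ∈ A' ∩ B,
          |(if h * g ∈ A then a⁻¹ else 0) - (if h ∈ B then b⁻¹ else 0)| = |a⁻¹ - b⁻¹| := by
        intro h hh
        rw [Finset.mem_inter] at hh
        rw [if_pos ((hmem h).mpr hh.1), if_pos hh.2]
      rw [Finset.sum_congr rfl e, Finset.sum_const, nsmul_eq_mul, ← hc3]
    have hS3 : (∑ h ∈ B \ A', |(if h * g ∈ A then a⁻¹ else 0) - (if h ∈ B then b⁻¹ else 0)|)
        = c2 * b⁻¹ := by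
      have e : ∀ h ∈ B \ A',
          |(if h * g ∈ A then a⁻¹ else 0) - (if h ∈ B then b⁻¹ else 0)| = b⁻¹ := by
        intro h hh
        rw [Finset.mem_sdiff] at hh
        rw [if_neg (fun hc => hh.2 ((hmem h).mp hc)), if_pos hh.1, zero_sub, abs_neg,
          abs_of_nonneg (inv_nonneg.mpr hbpos.le)]
      rw [Finset.sum_congr rfl e, Finset.sum_const, nsmul_eq_mul, ← hc2]
    have hmid : c3 * |a⁻¹ - b⁻¹| = |c2 / b - c1 / a| := by
      rw [← abs_of_nonneg hc3nn, ← abs_mul]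
      congr 1
      have hai : a * a⁻¹ = 1 := mul_inv_cancel₀ hapos.ne'
      have hbi : b * b⁻¹ = 1 := mul_inv_cancel₀ hbpos.ne'
      rw [div_eq_mul_inv, div_eq_mul_inv]
      linear_combination a⁻¹ * hsum1 - b⁻¹ * hsum2 + hai - hbi
    have hmidlt : c3 * |a⁻¹ - b⁻¹| < ε / 4 := by
      rw [hmid, abs_lt]
      have n1 : 0 ≤ c1 / a := div_nonneg hc1nn hapos.le
      have n2 : 0 ≤ c2 / b := div_nonneg hc2nn hbpos.le
      constructor
      · linarith
      · linarith
    have hc1a : c1 * a⁻¹ < ε / 4 := by rwa [← div_eq_mul_inv]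
    have hc2b : c2 * b⁻¹ < ε / 4 := by rwa [← div_eq_mul_inv]
    calc (∑' h : G, |(if h * g ∈ A then a⁻¹ else 0) - (if h ∈ B then b⁻¹ else 0)|)
        = c1 * a⁻¹ + c3 * |a⁻¹ - b⁻¹| + c2 * b⁻¹ := by
          rw [hts, hunion, Finset.sum_union hdisj2, Finset.sum_union hdisj1, hS1, hS2, hS3]
      _ < ε := by linarith
end

section
/- For finitely supported probability measures given by finite sets: for nonempty finite subsets F, F' of a group G and g ∈ G, define m = |F|⁻¹·1_F and m' = |F'|⁻¹·1_{F'} in ℓ¹(G), and let (g.m)(h) = m(hg). Then ‖g.m − m'‖₁ ≤ 2·|F·g⁻¹ \ F'| / |F| + 2·|F' \ F·g⁻¹| / |F'|. -/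
/-!
Translating by `g` turns `g.m` into the normalized indicator of `A = F·g⁻¹`, and `|A| = |F|`.
For normalized indicators of nonempty finite sets `A`, `B`, put `p = |A \ B|/|A|` and
`q = |B \ A|/|B|`. The ℓ¹-distance splits over `A \ B`, `B \ A` and `A ∩ B` as
`p + q + |A ∩ B|·||A|⁻¹ - |B|⁻¹|`, and since `|A ∩ B|/|A| = 1 - p` and `|A ∩ B|/|B| = 1 - q`
the last term is `|q - p| ≤ p + q`.
-/

open Finset

section IndicatorDistance

variable {α : Type*} [DecidableEq α]

lemma tsum_abs_ite_sub_ite (A B : Finset α) (a b : ℝ) :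
    ∑' h, |(if h ∈ A then a else 0) - (if h ∈ B then b else 0)|
      = #(A \ B) * |a| + #(B \ A) * |b| + #(A ∩ B) * |a - b| := by
  set f : α → ℝ := fun h ↦ |(if h ∈ A then a else 0) - (if h ∈ B then b else 0)|
  have hsupp : ∀ h ∉ A ∪ B, f h = 0 := fun h hh ↦ by simp_all [f]
  have hconst : ∀ (s : Finset α) (c : ℝ), (∀ h ∈ s, f h = c) → ∑ h ∈ s, f h = #s * c :=
    fun s c hs ↦ by rw [sum_congr rfl hs, sum_const, nsmul_eq_mul]
  rw [tsum_eq_sum hsupp, ← sdiff_union_self_eq_union, sum_union disjoint_sdiff_self_left,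
    ← sum_inter_add_sum_sdiff B A, inter_comm B A, hconst (A \ B) |a| ?_,
    hconst (A ∩ B) |a - b| ?_, hconst (B \ A) |b| ?_]
  · ring
  all_goals intro h hh; simp_all [f]

lemma card_inter_div_card_eq_one_sub (A B : Finset α) (hA : A.Nonempty) :
    (#(A ∩ B) : ℝ) / #A = 1 - #(A \ B) / #A := by
  have hcard : (#(A \ B) : ℝ) + #(A ∩ B) = #A := by exact_mod_cast card_sdiff_add_card_inter A B
  have hpos : (0 : ℝ) < #A := by exact_mod_cast hA.card_pos
  field_simp
  linarith

theorem tsum_abs_normalized_indicator_sub_le (A B : Finset α) (hA : A.Nonempty)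
    (hB : B.Nonempty) :
    ∑' h, |(if h ∈ A then (#A : ℝ)⁻¹ else 0) - (if h ∈ B then (#B : ℝ)⁻¹ else 0)|
      ≤ 2 * (#(A \ B) : ℝ) / #A + 2 * (#(B \ A) : ℝ) / #B := by
  have hA' := card_inter_div_card_eq_one_sub A B hA
  have hB' := card_inter_div_card_eq_one_sub B A hB
  rw [inter_comm] at hB'
  set p : ℝ := #(A \ B) / #A
  set q : ℝ := #(B \ A) / #B
  have hoverlap : (#(A ∩ B) : ℝ) * |(#A : ℝ)⁻¹ - (#B : ℝ)⁻¹| = |q - p| := by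
    rw [← sub_sub_sub_cancel_left p q 1, ← hA', ← hB', div_eq_mul_inv, div_eq_mul_inv, ← mul_sub,
      abs_mul, Nat.abs_cast]
  have hp : 0 ≤ p := by positivity
  have hq : 0 ≤ q := by positivity
  have hqp : |q - p| ≤ p + q := abs_sub_le_iff.2 ⟨by linarith, by linarith⟩
  rw [tsum_abs_ite_sub_ite, hoverlap, abs_of_nonneg (by positivity),
    abs_of_nonneg (by positivity), ← div_eq_mul_inv, ← div_eq_mul_inv, mul_div_assoc, mul_div_assoc]
  linarith

end IndicatorDistance

/-- ℓ¹-estimate for normalized characteristic measures. For nonempty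
finite subsets `F, F'` of a group `G` and `g ∈ G`, with `m = |F|⁻¹·1_F`,
`m' = |F'|⁻¹·1_{F'}` and `(g.m)(h) = m(hg)`, one has
`‖g.m − m'‖₁ ≤ 2·|F·g⁻¹ \ F'|/|F| + 2·|F' \ F·g⁻¹|/|F'|`. -/
theorem stmt5 {G : Type} [Group G] [DecidableEq G] (F F' : Finset G)
    (hF : F.Nonempty) (hF' : F'.Nonempty) (g : G) :
    ∑' h : G,
        |(if h * g ∈ F then ((F.card : ℝ))⁻¹ else 0) -
          (if h ∈ F' then ((F'.card : ℝ))⁻¹ else 0)|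
      ≤ 2 * (((F.image (· * g⁻¹)) \ F').card : ℝ) / F.card
        + 2 * ((F' \ (F.image (· * g⁻¹))).card : ℝ) / F'.card := by
  have hmem : ∀ h, h * g ∈ F ↔ h ∈ F.image (· * g⁻¹) := fun h ↦ by
    rw [image_mul_right', mem_preimage]
  simp_rw [hmem]
  rw [← card_image_of_injective F (mul_left_injective g⁻¹)]
  exact tsum_abs_normalized_indicator_sub_le _ _ (hF.image _) hF'
end

section
/- Let θ : G ↷ Ω and θ' : G ↷ Ω' be partial actions of a discrete group on locally compact Hausdorff spaces, and let f : Ω → Ω' be a continuous, equivariant map that is d-bijective, i.e. G^{f(x)} = G^x for all x ∈ Ω. If θ' is topologically amenable, then θ is topologically amenable: pulling back a topological approximate invariant mean (m_i) for θ' via μ_i^x := m_i^{f(x)} yields a topological approximate invariant mean for θ. -/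
/-- topological amenability pulls back along continuous, equivariant,
d-bijective maps. If `f : Ω → Ω'` is continuous and equivariant with
`G^{f(x)} = G^x` for all `x`, and `m` is a topological approximate invariant mean
for `θ'`, then `μ_i^x := m_i^{f(x)}` is a topological approximate invariant mean
for `θ`; in particular, if `θ'` is topologically amenable, then so is `θ`. -/
theorem stmt6 {G Ω Ω' I : Type} [Group G]
    [TopologicalSpace Ω] [T2Space Ω] [LocallyCompactSpace Ω]
    [TopologicalSpace Ω'] [T2Space Ω'] [LocallyCompactSpace Ω']
    [Preorder I] [Nonempty I] [IsDirected I (· ≤ ·)]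
    (θ : TopPartialAction G Ω) (θ' : TopPartialAction G Ω')
    (f : Ω → Ω') (hf : Continuous f)
    (hdom : ∀ g : G, f '' θ.dom g ⊆ θ'.dom g)
    (hequiv : ∀ (g : G) (x : Ω), x ∈ θ.dom g⁻¹ → θ'.act g (f x) = f (θ.act g x))
    (hdbij : ∀ (x : Ω) (g : G), f x ∈ θ'.dom g⁻¹ → x ∈ θ.dom g⁻¹)
    (m : I → Ω' → G → ℝ) (hm : IsTAIMean θ' m) :
    IsTAIMean θ (fun i x => m i (f x)) := by
  obtain ⟨h1, h2, h3, h4, h5⟩ := hm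
  refine ⟨fun i x g => h1 i (f x) g, fun i x g hne => hdbij x g (h2 i (f x) g hne),
    fun i x => h3 i (f x), ?_, ?_⟩
  · intro i g
    exact (h4 i g).comp hf.continuousOn
      (fun x hx => hdom g⁻¹ ⟨x, hx, rfl⟩)
  · intro g K hK hKc ε hε
    have hK' : f '' K ⊆ θ'.dom g⁻¹ := by
      rintro _ ⟨x, hx, rfl⟩
      exact hdom g⁻¹ ⟨x, hK hx, rfl⟩
    filter_upwards [h5 g (f '' K) hK' (hKc.image hf) ε hε] with i hi x hx
    have := hi (f x) ⟨x, hx, rfl⟩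
    rwa [hequiv g x (hK hx)] at this
end

section
/- Let p : Ω → Υ be a continuous surjection of Hausdorff spaces such that every y ∈ Υ has an open neighbourhood U with closure of p⁻¹(U) compact in Ω. Let C be a (Hausdorff) compactification of Υ with boundary ∂Υ = C \ Υ. Then Ω ⊔ ∂Υ, equipped with the smallest topology making the inclusion Ω ↪ Ω ⊔ ∂Υ an open embedding and the map p ⊔ id : Ω ⊔ ∂Υ → C continuous, is a compact Hausdorff space. -/
/-!
Write `q = (ι ∘ p) ⊔ val : Ω ⊔ ∂Υ → C`. Since a neighbourhood `U` of `y` lies in the compact set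
`p (closure (p⁻¹ U))`, the space `Υ` is weakly locally compact, and a weakly locally compact dense
subspace of a Hausdorff space is open; so `∂Υ` is closed in `C`. A point of `∂Υ` has the
neighbourhoods `q⁻¹ V`, and a point of `Υ` has a neighbourhood `V ⊆ Υ` in `C` whose preimage `q⁻¹ V`
lies in a compact subset of `Ω`. Hence an ultrafilter on `Ω ⊔ ∂Υ`, whose image under `q`
converges in the compact space `C`, converges. Points with distinct `q`-values are separated
by `q`, and distinct points of `Ω` by `Ω` itself.
-/

open Set Filter Topology TopologicalSpace

section DenseRange

variable {Y Z : Type*} [TopologicalSpace Y] [TopologicalSpace Z] [T2Space Z] {ι : Y → Z}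

theorem DenseRange.subset_image_of_preimage_subset (hd : DenseRange ι) (hι : Continuous ι)
    {t : Set Z} (ht : IsOpen t) {L : Set Y} (hL : IsCompact L) (htL : ι ⁻¹' t ⊆ L) :
    t ⊆ ι '' L :=
  calc t ⊆ closure (t ∩ range ι) := hd.open_subset_closure_inter ht
    _ = closure (ι '' (ι ⁻¹' t)) := by rw [image_preimage_eq_inter_range]
    _ ⊆ closure (ι '' L) := closure_mono (image_mono htL)
    _ = ι '' L := (hL.image hι).isClosed.closure_eq

theorem DenseRange.isOpen_range [WeaklyLocallyCompactSpace Y] (hd : DenseRange ι)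
    (hι : IsInducing ι) : IsOpen (range ι) := by
  refine isOpen_iff_forall_mem_open.2 ?_
  rintro _ ⟨y, rfl⟩
  obtain ⟨L, hL, hLy⟩ := exists_compact_mem_nhds y
  obtain ⟨s, hs, hsL⟩ := (hι.nhds_eq_comap y ▸ hLy : L ∈ comap ι (𝓝 (ι y)))
  have htL : ι ⁻¹' interior s ⊆ L := (preimage_mono interior_subset).trans hsL
  exact ⟨interior s,
    (hd.subset_image_of_preimage_subset hι.continuous isOpen_interior hL htL).trans
      (image_subset_range _ _),
    isOpen_interior, mem_interior_iff_mem_nhds.2 hs⟩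

end DenseRange

theorem weaklyLocallyCompactSpace_of_isCompact_closure_preimage {X Y : Type*}
    [TopologicalSpace X] [TopologicalSpace Y] {p : X → Y} (hp : Continuous p)
    (hsurj : Function.Surjective p)
    (hloc : ∀ y : Y, ∃ U : Set Y, IsOpen U ∧ y ∈ U ∧ IsCompact (closure (p ⁻¹' U))) :
    WeaklyLocallyCompactSpace Y where
  exists_compact_mem_nhds y := by
    obtain ⟨U, hU, hyU, hK⟩ := hloc y
    refine ⟨_, hK.image hp, mem_of_superset (hU.mem_nhds hyU) ?_⟩
    calc U = p '' (p ⁻¹' U) := (image_preimage_eq U hsurj).symm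
      _ ⊆ p '' closure (p ⁻¹' U) := image_mono subset_closure

abbrev gluedTopology {X B C : Type*} [TopologicalSpace X] [TopologicalSpace C]
    (f : X → C) (g : B → C) : TopologicalSpace (X ⊕ B) :=
  generateFrom ({s | ∃ U : Set X, IsOpen U ∧ s = Sum.inl '' U} ∪
    {s | ∃ V : Set C, IsOpen V ∧ s = Sum.elim f g ⁻¹' V})

namespace gluedTopology

variable {X B C : Type*} [TopologicalSpace X] [TopologicalSpace C] (f : X → C) (g : B → C)

theorem isOpen_inl_image {U : Set X} (hU : IsOpen U) :
    IsOpen[gluedTopology f g] (Sum.inl '' U) :=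
  isOpen_generateFrom_of_mem (Or.inl ⟨U, hU, rfl⟩)

theorem continuous_sumElim : Continuous[gluedTopology f g, _] (Sum.elim f g) :=
  continuous_def.2 fun V hV => isOpen_generateFrom_of_mem (Or.inr ⟨V, hV, rfl⟩)

theorem continuous_inl (hf : Continuous f) :
    Continuous[_, gluedTopology f g] (Sum.inl : X → X ⊕ B) := by
  rw [gluedTopology, continuous_generateFrom_iff]
  rintro s (⟨U, hU, rfl⟩ | ⟨V, hV, rfl⟩)
  · rwa [preimage_image_eq U Sum.inl_injective]
  · exact hf.isOpen_preimage V hV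

theorem nhds_inr (b : B) :
    @nhds _ (gluedTopology f g) (Sum.inr b) = comap (Sum.elim f g) (𝓝 (g b)) := by
  let := gluedTopology f g
  refine le_antisymm (tendsto_iff_comap.1 ((continuous_sumElim f g).tendsto _)) ?_
  rw [gluedTopology, nhds_generateFrom]
  refine le_iInf₂ ?_
  rintro s ⟨hbs, ⟨U, -, rfl⟩ | ⟨V, hV, rfl⟩⟩
  · exact absurd hbs (by simp)
  · exact le_principal_iff.2 (preimage_mem_comap (hV.mem_nhds hbs))

theorem compactSpace [CompactSpace C] (hf : Continuous f) (hg : IsClosed (range g))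
    (hloc : ∀ c ∉ range g, ∃ V ∈ 𝓝 c, ∃ K : Set X, IsCompact K ∧ f ⁻¹' V ⊆ K) :
    @CompactSpace (X ⊕ B) (gluedTopology f g) := by
  let := gluedTopology f g
  refine ⟨isCompact_iff_ultrafilter_le_nhds.2 fun F _ => ?_⟩
  obtain ⟨c, -, hc⟩ := isCompact_univ.ultrafilter_le_nhds (F.map (Sum.elim f g)) (by simp)
  by_cases hcg : c ∈ range g
  · obtain ⟨b, rfl⟩ := hcg
    exact ⟨Sum.inr b, trivial, (nhds_inr f g b).symm ▸ map_le_iff_le_comap.1 hc⟩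
  · obtain ⟨V, hV, K, hK, hVK⟩ := hloc c hcg
    have hinl : Sum.elim f g ⁻¹' (V ∩ (range g)ᶜ) ⊆ Sum.inl '' K := by
      rintro (x | b) ⟨hx, hb⟩
      · exact ⟨x, hVK hx, rfl⟩
      · exact absurd (mem_range_self b) hb
    have hKF : Sum.inl '' K ∈ F :=
      mem_of_superset (hc (inter_mem hV (hg.isOpen_compl.mem_nhds hcg))) hinl
    obtain ⟨x, -, hx⟩ :=
      (hK.image (continuous_inl f g hf)).ultrafilter_le_nhds F (le_principal_iff.2 hKF)
    exact ⟨x, trivial, hx⟩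

theorem t2Space [T2Space X] [T2Space C] (hg : Function.Injective g)
    (hfg : Disjoint (range f) (range g)) :
    @T2Space (X ⊕ B) (gluedTopology f g) := by
  let := gluedTopology f g
  have hsep : ∀ {u v : X ⊕ B}, Sum.elim f g u ≠ Sum.elim f g v → ∃ U V : Set (X ⊕ B),
      IsOpen U ∧ IsOpen V ∧ u ∈ U ∧ v ∈ V ∧ Disjoint U V :=
    separated_by_continuous (continuous_sumElim f g)
  refine ⟨?_⟩
  rintro (x | b) (x' | b') hne
  · obtain ⟨U, V, hU, hV, hxU, hxV, hUV⟩ := t2_separation (ne_of_apply_ne Sum.inl hne)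
    exact ⟨_, _, isOpen_inl_image f g hU, isOpen_inl_image f g hV, mem_image_of_mem _ hxU,
      mem_image_of_mem _ hxV, (disjoint_image_iff Sum.inl_injective).2 hUV⟩
  · exact hsep (disjoint_range_iff.1 hfg x b')
  · exact hsep (disjoint_range_iff.1 hfg x' b).symm
  · exact hsep (hg.ne (ne_of_apply_ne Sum.inr hne))

end gluedTopology

theorem stmt7_general {Ω Υ C : Type}
    [TopologicalSpace Ω] [TopologicalSpace Υ] [TopologicalSpace C]
    [T2Space Ω] [CompactSpace C] [T2Space C]
    (p : Ω → Υ) (hp : Continuous p) (hsurj : Function.Surjective p)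
    (hloc : ∀ y : Υ, ∃ U : Set Υ, IsOpen U ∧ y ∈ U ∧ IsCompact (closure (p ⁻¹' U)))
    (ι : Υ → C) (hι : Topology.IsEmbedding ι) (hdense : DenseRange ι) :
    @CompactSpace (Ω ⊕ {c : C // c ∉ Set.range ι})
        (TopologicalSpace.generateFrom
          ({s | ∃ U : Set Ω, IsOpen U ∧ s = Sum.inl '' U} ∪
           {s | ∃ V : Set C, IsOpen V ∧
              s = (Sum.elim (ι ∘ p) Subtype.val) ⁻¹' V})) ∧
    @T2Space (Ω ⊕ {c : C // c ∉ Set.range ι})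
        (TopologicalSpace.generateFrom
          ({s | ∃ U : Set Ω, IsOpen U ∧ s = Sum.inl '' U} ∪
           {s | ∃ V : Set C, IsOpen V ∧
              s = (Sum.elim (ι ∘ p) Subtype.val) ⁻¹' V})) := by
  have := weaklyLocallyCompactSpace_of_isCompact_closure_preimage hp hsurj hloc
  have hboundary : IsClosed (range (Subtype.val : {c : C // c ∉ range ι} → C)) := by
    rw [Subtype.range_val_subtype]
    exact (hdense.isOpen_range hι.isInducing).isClosed_compl
  refine ⟨gluedTopology.compactSpace _ _ (hι.continuous.comp hp) hboundary ?_,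
    gluedTopology.t2Space _ _ Subtype.val_injective
      (disjoint_range_iff.2 fun ω c h => c.2 ⟨p ω, h⟩)⟩
  intro c hc
  obtain ⟨y, rfl⟩ : c ∈ range ι := by simpa using hc
  obtain ⟨U, hU, hyU, hK⟩ := hloc y
  obtain ⟨t, ht, rfl⟩ := hι.isInducing.isOpen_iff.1 hU
  exact ⟨t, ht.mem_nhds hyU, _, hK, subset_closure⟩

/-- Let `p : Ω → Υ` be a continuous surjection of Hausdorff spaces such
that each `y ∈ Υ` has an open neighbourhood `U` with `closure (p⁻¹(U))` compact, and
let `C` be a compactification of `Υ` (a compact Hausdorff space containing `Υ` as a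
dense subspace via an embedding `ι`). Then `Ω ⊔ ∂Υ` (with `∂Υ = C \ Υ`), equipped
with the smallest topology making `Ω ↪ Ω ⊔ ∂Υ` open and `p ⊔ id : Ω ⊔ ∂Υ → C`
continuous, is a compact Hausdorff space. -/
theorem stmt7 {Ω Υ C : Type}
    [TopologicalSpace Ω] [TopologicalSpace Υ] [TopologicalSpace C]
    [T2Space Ω] [T2Space Υ] [CompactSpace C] [T2Space C]
    (p : Ω → Υ) (hp : Continuous p) (hsurj : Function.Surjective p)
    (hloc : ∀ y : Υ, ∃ U : Set Υ, IsOpen U ∧ y ∈ U ∧ IsCompact (closure (p ⁻¹' U)))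
    (ι : Υ → C) (hι : Topology.IsEmbedding ι) (hdense : DenseRange ι) :
    @CompactSpace (Ω ⊕ {c : C // c ∉ Set.range ι})
        (TopologicalSpace.generateFrom
          ({s | ∃ U : Set Ω, IsOpen U ∧ s = Sum.inl '' U} ∪
           {s | ∃ V : Set C, IsOpen V ∧
              s = (Sum.elim (ι ∘ p) Subtype.val) ⁻¹' V})) ∧
    @T2Space (Ω ⊕ {c : C // c ∉ Set.range ι})
        (TopologicalSpace.generateFrom
          ({s | ∃ U : Set Ω, IsOpen U ∧ s = Sum.inl '' U} ∪
           {s | ∃ V : Set C, IsOpen V ∧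
              s = (Sum.elim (ι ∘ p) Subtype.val) ⁻¹' V})) :=
  stmt7_general p hp hsurj hloc ι hι hdense
end

section
/- Let (E, C) be a finitely separated graph equipped with an orientation 𝔬 : E¹ → {−1, 1} (so E¹ = E¹₊ ⊔ E¹₋ such that for every vertex v, either E¹₋ ∩ r⁻¹(v) ∈ C_v and E¹₊ ∩ s⁻¹(v) = ∅, or E¹₋ ∩ r⁻¹(v) = ∅ and |E¹₊ ∩ s⁻¹(v)| ≤ 1). Then every admissible path α factors as α = α₋α₊ where α₊ is a (possibly trivial) positively oriented admissible path and α₋ is a (possibly trivial) negatively oriented admissible path. Equivalently: if f^ε e^{−𝔬(e)} is an admissible two-letter path (ε ∈ {±1}), then ε = −𝔬(f). -/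
namespace SepGraphStmt

/-- A finitely separated graph: a directed graph with a colouring of the edges
such that edges of the same colour have the same range, and each colour class is finite.
(The colour classes with range `v` form the partition `C_v` of `r⁻¹(v)`.) -/
structure SepGraph (V E Λ : Type) where
  r : E → V
  s : E → V
  col : E → Λ
  col_range : ∀ e f, col e = col f → r e = r f
  col_finite : ∀ l : Λ, {e : E | col e = l}.Finite

variable {V E Λ : Type}

/-- A letter of the double graph: an edge together with a direction
(`true` = the edge itself, `false` = its formal inverse). -/
abbrev Letter (E : Type) := E × Bool

def src (G : SepGraph V E Λ) (a : Letter E) : V :=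
  if a.2 then G.s a.1 else G.r a.1

def rng (G : SepGraph V E Λ) (a : Letter E) : V :=
  if a.2 then G.r a.1 else G.s a.1

/-- Letter `b` may follow letter `a` in an admissible path
(words are written in application order: the first letter of a list is traversed first). -/
def ok (G : SepGraph V E Λ) (a b : Letter E) : Prop :=
  src G b = rng G a ∧
    (a.2 = false → b.2 = true → b.1 ≠ a.1) ∧
    (a.2 = true → b.2 = false → G.col b.1 ≠ G.col a.1)

def Admissible (G : SepGraph V E Λ) (w : List (Letter E)) : Prop :=
  List.Chain' (ok G) w

/-- Formal inverse of a word. -/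
def wInv (w : List (Letter E)) : List (Letter E) :=
  (w.map fun a => (a.1, !a.2)).reverse

/-- The source of the (nonempty) word is `v`. -/
def headIs (G : SepGraph V E Λ) (w : List (Letter E)) (v : V) : Prop :=
  ∀ a ∈ w.head?, src G a = v

/-- The range of the (nonempty) word is `v`. -/
def lastIs (G : SepGraph V E Λ) (w : List (Letter E)) (v : V) : Prop :=
  ∀ a ∈ w.getLast?, rng G a = v

/-- `w` is an admissible path from `u` to `v`. -/
def IsPath (G : SepGraph V E Λ) (w : List (Letter E)) (u v : V) : Prop :=
  Admissible G w ∧ (w = [] → u = v) ∧ headIs G w u ∧ lastIs G w v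

/-- `w` is a closed path based at `v`. -/
def IsClosed (G : SepGraph V E Λ) (w : List (Letter E)) (v : V) : Prop :=
  w ≠ [] ∧ Admissible G w ∧ headIs G w v ∧ lastIs G w v

/-- `w` is a cycle: a nontrivial path whose square is admissible. -/
def IsCycle (G : SepGraph V E Λ) (w : List (Letter E)) : Prop :=
  w ≠ [] ∧ Admissible G (w ++ w)

/-- `w` is a cycle based at `v`. -/
def CycleAt (G : SepGraph V E Λ) (w : List (Letter E)) (v : V) : Prop :=
  IsCycle G w ∧ headIs G w v

/-- A nontrivial admissible path `w` allows a return: some `βw` is a closed path. -/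
def AllowsReturn (G : SepGraph V E Λ) (w : List (Letter E)) : Prop :=
  w ≠ [] ∧ Admissible G w ∧ ∃ b u, IsClosed G (w ++ b) u

/-- A "returning item" at `v`: either an edge in `s⁻¹(v)` allowing a return,
or a colour class `X ∈ C_v` allowing a return. -/
def RetItem (G : SepGraph V E Λ) (v : V) : E ⊕ Λ → Prop
  | Sum.inl e => G.s e = v ∧ AllowsReturn G [(e, true)]
  | Sum.inr l => ∃ e, G.col e = l ∧ G.r e = v ∧ AllowsReturn G [(e, false)]

/-- `v` is a branching vertex. -/
def Branching (G : SepGraph V E Λ) (v : V) : Prop :=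
  ∃ x y z : E ⊕ Λ, x ≠ y ∧ x ≠ z ∧ y ≠ z ∧
    RetItem G v x ∧ RetItem G v y ∧ RetItem G v z

/-- The relation `u ⊸ v`: there is an admissible path `α : u → v` and a cycle `β`
based at `v` such that `α⁻¹βα` is admissible. -/
def Multimap (G : SepGraph V E Λ) (u v : V) : Prop :=
  ∃ α β, IsPath G α u v ∧ CycleAt G β v ∧ Admissible G (α ++ β ++ wInv α)

/-- A word is positively oriented w.r.t. an orientation `o`. -/
def Pos (o : E → Bool) (w : List (Letter E)) : Prop := ∀ a ∈ w, a.2 = o a.1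

/-- A word is negatively oriented w.r.t. an orientation `o`. -/
def Neg (o : E → Bool) (w : List (Letter E)) : Prop := ∀ a ∈ w, a.2 = !o a.1

/-- `o` is an orientation at `v` (Definition of orientation, with (2')). -/
def OrientAt (G : SepGraph V E Λ) (o : E → Bool) (v : V) : Prop :=
  ((∃ l : Λ, (∃ e, G.col e = l) ∧ (∀ e, (G.r e = v ∧ o e = false) ↔ G.col e = l)) ∧
    ∀ e, G.s e = v → o e = false) ∨
  ((∀ e, G.r e = v → o e = true) ∧
    ∀ e f, G.s e = v → G.s f = v → o e = true → o f = true → e = f)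

/-- `o` is a proper orientation at `v`. -/
def ProperOrientAt (G : SepGraph V E Λ) (o : E → Bool) (v : V) : Prop :=
  ((∃ l : Λ, (∃ e, G.col e = l) ∧ (∀ e, (G.r e = v ∧ o e = false) ↔ G.col e = l)) ∧
    ∀ e, G.s e = v → o e = false) ∨
  ((∀ e, G.r e = v → o e = true) ∧ ∃! e, G.s e = v ∧ o e = true)

/-- `w` is a base-simple closed path at `v`. -/
def BaseSimple (G : SepGraph V E Λ) (w : List (Letter E)) (v : V) : Prop :=
  IsClosed G w v ∧
    ∀ p, p ≠ [] → p.length < w.length → p <+: w → ¬ lastIs G p v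



lemma key {V E Λ : Type} (G : SepGraph V E Λ) (o : E → Bool)
    (ho : ∀ v : V, OrientAt G o v) (e f : E) (ε : Bool)
    (h : ok G (e, !o e) (f, ε)) : ε = !o f := by
  obtain ⟨hsrc, h1, h2⟩ := h
  simp only [src, rng] at hsrc
  cases hoe : o e <;> cases hε : ε <;> simp_all
  · rcases ho (G.r e) with ⟨⟨l, ⟨_, hl⟩⟩, _⟩ | ⟨hr, _⟩
    · by_contra hof
      simp at hof
      have hce : G.col e = l := (hl e).1 ⟨rfl, hoe⟩
      have hcf : G.col f = l := (hl f).1 ⟨hsrc, hof⟩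
      exact h2 (hcf.trans hce.symm)
    · exact absurd (hr e rfl) (by simp [hoe])
  · rcases ho (G.r e) with ⟨_, hs⟩ | ⟨hr, _⟩
    · exact hs f hsrc
    · exact absurd (hr e rfl) (by simp [hoe])
  · rcases ho (G.s e) with ⟨_, hs⟩ | ⟨hr, _⟩
    · exact absurd (hs e rfl) (by simp [hoe])
    · exact hr f hsrc
  · rcases ho (G.s e) with ⟨_, hs⟩ | ⟨_, huniq⟩
    · exact hs f hsrc
    · by_contra hof
      simp at hof
      exact h1 (huniq f e hsrc rfl hof hoe)

lemma negAll {V E Λ : Type} (G : SepGraph V E Λ) (o : E → Bool)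
    (ho : ∀ v : V, OrientAt G o v) :
    ∀ w : List (Letter E), List.Chain' (ok G) w →
      (∀ a ∈ w.head?, a.2 = !o a.1) → ∀ a ∈ w, a.2 = !o a.1
  | [] => by simp
  | [a] => by intro _ hh x hx; simp at hh hx; subst hx; exact hh
  | a :: b :: rest => by
    intro hc hh
    have ha : a.2 = !o a.1 := hh a (by simp)
    obtain ⟨hc1, hc2⟩ := List.isChain_cons_cons.mp hc
    have hb : b.2 = !o b.1 :=
      key G o ho a.1 b.1 b.2 (by rw [← ha]; simpa using hc1)
    intro x hx
    rcases List.mem_cons.mp hx with rfl | hx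
    · exact ha
    · exact negAll G o ho (b :: rest) hc2 (by intro y hy; simp at hy; subst hy; exact hb) x hx

/-- In an oriented finitely separated graph, every admissible path
factors as a positively oriented part followed by a negatively oriented part;
equivalently, if `f^ε e^{-𝔬(e)}` is admissible then `ε = -𝔬(f)`. -/
theorem stmt9 {V E Λ : Type} (G : SepGraph V E Λ) (o : E → Bool)
    (ho : ∀ v : V, OrientAt G o v) :
    (∀ w : List (Letter E), Admissible G w →
      ∃ p m : List (Letter E), w = p ++ m ∧ Pos o p ∧ Neg o m) ∧
    (∀ (e f : E) (ε : Bool),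
      Admissible G [(e, !o e), (f, ε)] → ε = !o f) := by
  constructor
  · intro w hw
    induction w with
    | nil => exact ⟨[], [], by simp, by simp [Pos], by simp [Neg]⟩
    | cons a rest ih =>
      by_cases hpa : a.2 = o a.1
      · obtain ⟨p, m, heq, hp, hm⟩ := ih hw.tail
        refine ⟨a :: p, m, by simp [heq], ?_, hm⟩
        intro x hx
        rcases List.mem_cons.mp hx with rfl | hx
        · exact hpa
        · exact hp x hx
      · have ha : a.2 = !o a.1 := by
          cases h2 : a.2 <;> cases h3 : o a.1 <;> simp_all
        refine ⟨[], a :: rest, by simp, by simp [Pos], ?_⟩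
        exact negAll G o ho (a :: rest) hw (by
          intro y hy; simp at hy; subst hy; exact ha)
  · intro e f ε h
    exact key G o ho e f ε (List.isChain_cons_cons.mp h).1

end SepGraphStmt
end

section
/- Let (E, C) be a finitely separated graph and define the relation u ⊸ v on vertices: there exists an admissible path α : u → v and a cycle β based at v such that α⁻¹βα is admissible. Then ⊸ is transitive. -/
namespace SepGraphStmt

variable {V E Λ : Type}

/-!
A letter enters its range through an item there: the edge `e` if the letter is `e⁻¹`, the colour
class of `e` if it is `e`; and `b` may follow `a` exactly when `b` does not leave through the item
by which `a` entered (`ok_iff`). If `α ++ β ++ wInv α` is admissible, the last letters of `α` and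
of `β` enter `v` through different items, so every letter leaving `v` may follow one of them.
Hence, given `v ⊸ w` via `γ, δ`, one of `α ++ γ` and `α ++ β ++ γ` is an admissible path
`μ : u → w`, and `μ ++ δ ++ wInv μ` is admissible because `γ ++ δ ++ wInv γ` is.
-/

def inv (a : Letter E) : Letter E := (a.1, !a.2)

@[simp] lemma inv_inv (a : Letter E) : inv (inv a) = a := by simp [inv]

@[simp] lemma src_inv (G : SepGraph V E Λ) (a : Letter E) : src G (inv a) = rng G a := by
  rcases a with ⟨e, _ | _⟩ <;> rfl

@[simp] lemma rng_inv (G : SepGraph V E Λ) (a : Letter E) : rng G (inv a) = src G a := by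
  rcases a with ⟨e, _ | _⟩ <;> rfl

def entry (G : SepGraph V E Λ) (a : Letter E) : E ⊕ Λ :=
  if a.2 then Sum.inr (G.col a.1) else Sum.inl a.1

lemma ok_iff {G : SepGraph V E Λ} {a b : Letter E} :
    ok G a b ↔ src G b = rng G a ∧ entry G a ≠ entry G (inv b) := by
  rcases a with ⟨e, _ | _⟩ <;> rcases b with ⟨f, _ | _⟩ <;> simp [ok, entry, inv, eq_comm]

lemma ok_inv {G : SepGraph V E Λ} {a b : Letter E} (h : ok G a b) : ok G (inv b) (inv a) := by
  rw [ok_iff] at h ⊢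
  simpa [eq_comm, ne_comm] using h

lemma ok_or_ok_of_ok_inv {G : SepGraph V E Λ} {a b c : Letter E} (hab : ok G b (inv a))
    (hc : src G c = rng G a) : ok G a c ∨ ok G b c := by
  simp only [ok_iff, inv_inv, src_inv] at *
  by_contra! h
  exact hab.2 ((h.1 hc).trans (h.2 (hc.trans hab.1)).symm).symm

lemma wInv_eq (x : List (Letter E)) : wInv x = (x.map inv).reverse := rfl

lemma wInv_append (x y : List (Letter E)) : wInv (x ++ y) = wInv y ++ wInv x := by
  simp [wInv]

@[simp] lemma wInv_wInv (x : List (Letter E)) : wInv (wInv x) = x := by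
  simp [wInv, List.map_reverse, Function.comp_def]

lemma head?_wInv (x : List (Letter E)) : (wInv x).head? = x.getLast?.map inv := by
  simp [wInv_eq, List.head?_reverse, List.getLast?_map]

lemma getLast?_wInv (x : List (Letter E)) : (wInv x).getLast? = x.head?.map inv := by
  simp [wInv_eq, List.getLast?_reverse, List.head?_map]

lemma Admissible.wInv {G : SepGraph V E Λ} {x : List (Letter E)} (h : Admissible G x) :
    Admissible G (wInv x) := by
  change List.IsChain (ok G) (x.map inv).reverse
  rw [List.isChain_reverse, List.isChain_map]
  exact List.IsChain.imp (fun _ _ => ok_inv) h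

def Joins (G : SepGraph V E Λ) (x y : List (Letter E)) : Prop :=
  ∀ a ∈ x.getLast?, ∀ b ∈ y.head?, ok G a b

lemma admissible_append {G : SepGraph V E Λ} {x y : List (Letter E)} :
    Admissible G (x ++ y) ↔ Admissible G x ∧ Admissible G y ∧ Joins G x y :=
  List.isChain_append

lemma joins_wInv {G : SepGraph V E Λ} {x y : List (Letter E)} :
    Joins G (wInv y) (wInv x) ↔ Joins G x y := by
  simp only [Joins, getLast?_wInv, head?_wInv, Option.mem_map]
  constructor
  · intro h a ha b hb
    simpa using ok_inv (h _ ⟨b, hb, rfl⟩ _ ⟨a, ha, rfl⟩)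
  · rintro h _ ⟨b, hb, rfl⟩ _ ⟨a, ha, rfl⟩
    exact ok_inv (h a ha b hb)

lemma joins_append_right {G : SepGraph V E Λ} {x y z : List (Letter E)} (hy : y ≠ []) :
    Joins G x (y ++ z) ↔ Joins G x y := by
  rw [Joins, List.head?_append_of_ne_nil y hy, Joins]

lemma joins_append_left {G : SepGraph V E Λ} {x y z : List (Letter E)} (hy : y ≠ []) :
    Joins G (x ++ y) z ↔ Joins G y z := by
  rw [Joins, List.getLast?_append_of_ne_nil x hy, Joins]

lemma IsPath.append {G : SepGraph V E Λ} {x y : List (Letter E)} {u v w : V}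
    (hx : IsPath G x u v) (hy : IsPath G y v w) (hxy : Joins G x y) : IsPath G (x ++ y) u w := by
  rcases eq_or_ne x [] with rfl | hx₀
  · simpa [hx.2.1 rfl] using hy
  rcases eq_or_ne y [] with rfl | hy₀
  · simpa [← hy.2.1 rfl] using hx
  refine ⟨admissible_append.2 ⟨hx.1, hy.1, hxy⟩, by simp [hx₀], ?_, ?_⟩
  · rw [headIs, List.head?_append_of_ne_nil x hx₀]; exact hx.2.2.1
  · rw [lastIs, List.getLast?_append_of_ne_nil x hy₀]; exact hy.2.2.2

lemma CycleAt.isPath {G : SepGraph V E Λ} {β : List (Letter E)} {v : V} (h : CycleAt G β v) :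
    IsPath G β v v := by
  obtain ⟨⟨hβ₀, hββ⟩, hhead⟩ := h
  obtain ⟨hβ, -, hjoin⟩ := admissible_append.1 hββ
  refine ⟨hβ, fun h => absurd h hβ₀, hhead, fun b hb => ?_⟩
  obtain ⟨h, t, rfl⟩ := List.exists_cons_of_ne_nil hβ₀
  rw [← (hjoin b hb h rfl).1, hhead h rfl]

lemma admissible_conj {G : SepGraph V E Λ} {ρ γ δ : List (Letter E)} (hγ : γ ≠ [])
    (hρ : Admissible G ρ) (hγδ : Admissible G (γ ++ δ ++ wInv γ)) (hργ : Joins G ρ γ) :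
    Admissible G (ρ ++ γ ++ δ ++ wInv (ρ ++ γ)) := by
  have hq : γ ++ δ ++ wInv γ ≠ [] := by simp [hγ]
  have hjoin : Joins G ρ (γ ++ δ ++ wInv γ) := by
    rwa [List.append_assoc, joins_append_right hγ]
  have hjoin' : Joins G (γ ++ δ ++ wInv γ) (wInv ρ) := by
    rw [← joins_wInv, wInv_wInv, wInv_append, wInv_append, wInv_wInv,
      joins_append_right hγ]
    exact hργ
  have h := admissible_append.2 ⟨admissible_append.2 ⟨hρ, hγδ, hjoin⟩, hρ.wInv,
    (joins_append_left hq).2 hjoin'⟩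
  simpa [wInv_append, List.append_assoc] using h

lemma Multimap.exists_isPath_joins {G : SepGraph V E Λ} {u v : V} (h : Multimap G u v)
    {γ : List (Letter E)} (hγ : headIs G γ v) : ∃ ρ, IsPath G ρ u v ∧ Joins G ρ γ := by
  obtain ⟨α, β, hα, hβ, hαβα⟩ := h
  by_cases hαγ : Joins G α γ
  · exact ⟨α, hα, hαγ⟩
  obtain ⟨a, ha, c, hc, hac⟩ : ∃ a ∈ α.getLast?, ∃ c ∈ γ.head?, ¬ ok G a c := by
    simpa only [Joins, not_forall, exists_prop] using hαγ
  obtain ⟨hαβ, -, hβα⟩ := admissible_append.1 hαβα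
  have hβ₀ : β ≠ [] := hβ.1.1
  refine ⟨α ++ β, hα.append hβ.isPath (admissible_append.1 hαβ).2.2, ?_⟩
  rw [joins_append_left hβ₀]
  intro b hb c' hc'
  obtain rfl : c = c' := Option.mem_unique hc hc'
  have hba : ok G b (inv a) :=
    (joins_append_left hβ₀).1 hβα b hb (inv a) (by simp [head?_wInv, Option.mem_def.1 ha])
  exact (ok_or_ok_of_ok_inv hba ((hγ c hc).trans (hα.2.2.2 a ha).symm)).resolve_left hac

/-- The relation `u ⊸ v` on the vertices of a finitely separated graph
is transitive. -/
theorem stmt11 {V E Λ : Type} (G : SepGraph V E Λ) :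
    Transitive (Multimap G) := by
  rintro u v w huv ⟨γ, δ, hγ, hδ, hγδ⟩
  rcases eq_or_ne γ [] with rfl | hγ₀
  · rwa [← hγ.2.1 rfl]
  obtain ⟨ρ, hρ, hργ⟩ := huv.exists_isPath_joins hγ.2.2.1
  exact ⟨ρ ++ γ, δ, hρ.append hγ hργ, hδ, admissible_conj hγ₀ hρ.1 hγδ hργ⟩

end SepGraphStmt
end

section
/- Let (E, C) be a finitely separated graph and let v be a branching vertex that admits a local orientation of type (1), i.e. there is X_v ∈ C_v such that every base-simple closed path α based at v has initial symbol in X_v⁻¹ or terminal symbol in X_v. Then every closed path α based at v (not necessarily base-simple) satisfies: the initial symbol of α lies in X_v⁻¹ or the terminal symbol of α lies in X_v. -/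
namespace SepGraphStmt

variable {V E Λ : Type}

def InitInvOrTermIn (G : SepGraph V E Λ) (X : Λ) (w : List (Letter E)) : Prop :=
  (∃ e, w.head? = some (e, false) ∧ G.col e = X) ∨
    (∃ e, w.getLast? = some (e, true) ∧ G.col e = X)

theorem InitInvOrTermIn.append {G : SepGraph V E Λ} {X : Λ} {p q : List (Letter E)}
    (hadm : Admissible G (p ++ q)) (hp : p ≠ []) (hq : q ≠ [])
    (hpX : InitInvOrTermIn G X p) (hqX : InitInvOrTermIn G X q) :
    InitInvOrTermIn G X (p ++ q) := by
  rw [InitInvOrTermIn, List.head?_append_of_ne_nil p hp, List.getLast?_append_of_ne_nil p hq]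
  rcases hpX with hinit | ⟨e, hpe, he⟩
  · exact Or.inl hinit
  refine hqX.resolve_left ?_ |> Or.inr
  rintro ⟨f, hqf, hf⟩
  -- a letter `e ∈ X` cannot be followed by some `f⁻¹` with `f ∈ X`
  have hjunction := (List.isChain_append.mp hadm).2.2 _ hpe _ hqf
  exact hjunction.2.2 rfl rfl (hf.trans he.symm)

theorem IsClosed.split {G : SepGraph V E Λ} {v : V} {p q : List (Letter E)}
    (hw : IsClosed G (p ++ q) v) (hp : p ≠ []) (hq : q ≠ []) (hpv : lastIs G p v) :
    IsClosed G p v ∧ IsClosed G q v := by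
  obtain ⟨-, hadm, hhead, hlast⟩ := hw
  obtain ⟨hadp, hadq, hjunction⟩ := List.isChain_append.mp hadm
  rw [headIs, List.head?_append_of_ne_nil p hp] at hhead
  rw [lastIs, List.getLast?_append_of_ne_nil p hq] at hlast
  have hpLast := List.getLast?_eq_some_getLast hp
  refine ⟨⟨hp, hadp, hhead, hpv⟩, ⟨hq, hadq, fun b hb => ?_, hlast⟩⟩
  rw [(hjunction _ hpLast _ hb).1, hpv _ hpLast]

/-- Induction on length: a closed path that is not base-simple splits at an earlier return
to `v` into two shorter closed paths, and `InitInvOrTermIn.append` recombines them. -/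
theorem initInvOrTermIn_of_isClosed {G : SepGraph V E Λ} {v : V} {X : Λ}
    (hbs : ∀ w, BaseSimple G w v → InitInvOrTermIn G X w) :
    ∀ w, IsClosed G w v → InitInvOrTermIn G X w := by
  intro w hw
  by_cases hsimple : ∀ p, p ≠ [] → p.length < w.length → p <+: w → ¬ lastIs G p v
  · exact hbs w ⟨hw, hsimple⟩
  simp only [not_forall, not_not] at hsimple
  obtain ⟨p, hp, hlen, ⟨q, rfl⟩, hpv⟩ := hsimple
  have hq : q ≠ [] := by rintro rfl; simp at hlen
  obtain ⟨hpc, hqc⟩ := hw.split hp hq hpv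
  have hq_lt : q.length < (p ++ q).length := by
    simpa [List.length_append] using List.length_pos_iff.mpr hp
  exact (initInvOrTermIn_of_isClosed hbs p hpc).append hw.2.1 hp hq
    (initInvOrTermIn_of_isClosed hbs q hqc)
termination_by w => w.length

theorem stmt13_general {V E Λ : Type} (G : SepGraph V E Λ) (v : V) (X : Λ)
    (hbs : ∀ w : List (Letter E), BaseSimple G w v →
      (∃ e, w.head? = some (e, false) ∧ G.col e = X) ∨
      (∃ e, w.getLast? = some (e, true) ∧ G.col e = X)) :
    ∀ w : List (Letter E), IsClosed G w v →
      (∃ e, w.head? = some (e, false) ∧ G.col e = X) ∨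
      (∃ e, w.getLast? = some (e, true) ∧ G.col e = X) :=
  initInvOrTermIn_of_isClosed hbs

/-- If a branching vertex `v` admits a local orientation of type (1)
witnessed by `X ∈ C_v` on base-simple closed paths, then every closed path based at `v`
has initial symbol in `X⁻¹` or terminal symbol in `X`. -/
theorem stmt13 {V E Λ : Type} (G : SepGraph V E Λ) (v : V) (hv : Branching G v)
    (X : Λ) (hX : ∃ e, G.col e = X ∧ G.r e = v)
    (hbs : ∀ w : List (Letter E), BaseSimple G w v →
      (∃ e, w.head? = some (e, false) ∧ G.col e = X) ∨
      (∃ e, w.getLast? = some (e, true) ∧ G.col e = X)) :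
    ∀ w : List (Letter E), IsClosed G w v →
      (∃ e, w.head? = some (e, false) ∧ G.col e = X) ∨
      (∃ e, w.getLast? = some (e, true) ∧ G.col e = X) :=
  stmt13_general G v X hbs

end SepGraphStmt
end

section
/- Let F be the subgroup of a free group 𝔽 generated by two elements α and β, and suppose: (i) α and β are both nontrivial; (ii) if F has rank 1, i.e. α = γ^m and β = γ^n for some γ ∈ 𝔽 with m, n nonzero integers, and the product βα is reduced (no cancellation between β and α as reduced words), then m and n have the same sign; (iii) the longest common prefix γ₀ = α ∧ β of α and β (as reduced words) is a proper prefix of both. Then, assuming βα is reduced as a concatenation, F is free of rank 2 (F ≅ 𝔽₂). -/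
/-!
By Nielsen–Schreier `⟨α, β⟩` is free, and abelianizing shows its rank is at most `2`; if the
rank is not `2`, the subgroup is cyclic, so `α` and `β` commute. Then `αβ = βα` has length
`|α| + |β|`, so both concatenations are reduced and the words satisfy `αβ = βα`. Hence the
shorter of the two words is a suffix of the other, i.e. a common initial segment of `α` and `β`,
and maximality of `γ₀` forces `γ₀ = α` or `γ₀ = β`.
-/

open Cardinal Subgroup

namespace List

theorem isSuffix_or_isSuffix_of_append_comm {α : Type*} {l₁ l₂ : List α}
    (h : l₁ ++ l₂ = l₂ ++ l₁) : l₁ <:+ l₂ ∨ l₂ <:+ l₁ :=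
  suffix_or_suffix_of_suffix (h ▸ suffix_append l₂ l₁) (suffix_append l₁ l₂)

end List

namespace FreeGroup

variable {α : Type*} [DecidableEq α] {x y : FreeGroup α}

theorem toWord_mul_of_length_eq
    (h : (x * y).toWord.length = x.toWord.length + y.toWord.length) :
    (x * y).toWord = x.toWord ++ y.toWord := by
  rw [toWord_mul] at h ⊢
  exact reduce.red.sublist.eq_of_length (by simpa using h)

theorem toWord_append_comm_of_commute (hxy : Commute x y)
    (h : (y * x).toWord = y.toWord ++ x.toWord) :
    x.toWord ++ y.toWord = y.toWord ++ x.toWord := by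
  rw [← h, ← hxy.eq]
  exact (toWord_mul_of_length_eq (by rw [hxy.eq, h, List.length_append, add_comm])).symm

end FreeGroup

namespace IsFreeGroup

variable {G : Type*} [Group G] [IsFreeGroup G]

theorem mk_generators_le_of_closure_eq_top {s : Set G} (hs : closure s = ⊤) :
    #(Generators G) ≤ #s := by
  let ψ : G →* Multiplicative (Generators G →₀ ℤ) :=
    lift fun x => Multiplicative.ofAdd (Finsupp.single x 1)
  let V := Submodule.span ℤ (Multiplicative.toAdd ∘ ψ '' s)
  have hV : V = ⊤ := by
    have hle : closure s ≤ (AddSubgroup.toSubgroup V.toAddSubgroup).comap ψ :=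
      (closure_le _).mpr fun g hg => Submodule.subset_span ⟨g, hg, rfl⟩
    rw [eq_top_iff, ← Finsupp.basisSingleOne.span_eq, Submodule.span_le]
    rintro _ ⟨x, rfl⟩
    have := hle (hs ▸ mem_top (of x))
    rwa [mem_comap, lift_of] at this
  calc #(Generators G)
      ≤ #(Multiplicative.toAdd ∘ ψ '' s) :=
        linearIndependent_le_span'' (Finsupp.linearIndependent_single_one ℤ _) _ hV
    _ ≤ #s := mk_image_le

theorem mk_generators_closure_le (s : Set G) : #(Generators (closure s)) ≤ #s :=
  (mk_generators_le_of_closure_eq_top closure_closure_coe_preimage).trans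
    (mk_preimage_of_injective _ _ Subtype.val_injective)

theorem commute_of_subsingleton_generators [Subsingleton (Generators G)] (x y : G) :
    Commute x y := by
  have : IsCyclic (FreeGroup (Generators G)) := by
    cases isEmpty_or_nonempty (Generators G)
    · infer_instance
    · have := uniqueOfSubsingleton (Classical.arbitrary (Generators G))
      infer_instance
  have : IsCyclic G := (toFreeGroup G).isCyclic.mpr this
  exact IsCyclic.commGroup.mul_comm x y

theorem nonempty_closure_pair_mulEquiv_or_commute (a b : G) :
    Nonempty (closure {a, b} ≃* FreeGroup (Fin 2)) ∨ Commute a b := by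
  set H := closure {a, b}
  have hcard : #(Generators H) ≤ 2 :=
    (mk_generators_closure_le _).trans (mk_insert_le.trans (by norm_num))
  have : Finite (Generators H) := lt_aleph0_iff_finite.mp (hcard.trans_lt natCast_lt_aleph0)
  have hcard' : Nat.card (Generators H) ≤ 2 := by
    rwa [← Nat.cast_card, Nat.cast_le_ofNat] at hcard
  rcases hcard'.eq_or_lt with h2 | h1
  · exact .inl ⟨(toFreeGroup H).trans (FreeGroup.freeGroupCongr (Finite.equivFinOfCardEq h2))⟩
  · have := Finite.card_le_one_iff_subsingleton.mp (Nat.lt_succ_iff.mp h1)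
    have hab := commute_of_subsingleton_generators (⟨a, subset_closure (by simp)⟩ : H)
      ⟨b, subset_closure (by simp)⟩
    exact .inr (congrArg Subtype.val hab.eq)

end IsFreeGroup

theorem stmt14_general {ι : Type} [DecidableEq ι] (α β γ₀ : FreeGroup ι)
    (hγ₀α : γ₀.toWord <:+ α.toWord) (hγ₀β : γ₀.toWord <:+ β.toWord)
    (hγ₀max : ∀ δ : FreeGroup ι, δ.toWord <:+ α.toWord → δ.toWord <:+ β.toWord →
      δ.toWord.length ≤ γ₀.toWord.length)
    (hproper₁ : γ₀ ≠ α) (hproper₂ : γ₀ ≠ β)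
    (hred : (β * α).toWord = β.toWord ++ α.toWord) :
    Nonempty ((Subgroup.closure ({α, β} : Set (FreeGroup ι))) ≃* FreeGroup (Fin 2)) := by
  refine (IsFreeGroup.nonempty_closure_pair_mulEquiv_or_commute α β).resolve_right fun hcomm => ?_
  rcases List.isSuffix_or_isSuffix_of_append_comm
      (FreeGroup.toWord_append_comm_of_commute hcomm hred) with hαβ | hβα
  · exact hproper₁ (FreeGroup.toWord_injective
      (hγ₀α.eq_of_length_le (hγ₀max α List.suffix_rfl hαβ)))
  · exact hproper₂ (FreeGroup.toWord_injective
      (hγ₀β.eq_of_length_le (hγ₀max β hβα List.suffix_rfl)))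

/-- Let `α, β` be elements of a free group, identified with their reduced
words (initial segments of a path are suffixes of the reduced word, words being read
from the right). Suppose: (i) `α` and `β` are nontrivial; (ii) if `α = γ^m`, `β = γ^n`
with `m, n` nonzero and the concatenation `βα` is reduced, then `m` and `n` have the
same sign; (iii) the longest common initial segment `γ₀` of `α` and `β` is a proper
initial segment of both. Then, assuming the concatenation `βα` is reduced, the
subgroup `⟨α, β⟩` is free of rank `2`. -/
theorem stmt14 {ι : Type} [DecidableEq ι] (α β γ₀ : FreeGroup ι)
    (hα : α ≠ 1) (hβ : β ≠ 1)
    (hrank1 : ∀ (γ : FreeGroup ι) (m n : ℤ), m ≠ 0 → n ≠ 0 →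
      α = γ ^ m → β = γ ^ n →
      (β * α).toWord = β.toWord ++ α.toWord → (0 < m ↔ 0 < n))
    (hγ₀α : γ₀.toWord <:+ α.toWord) (hγ₀β : γ₀.toWord <:+ β.toWord)
    (hγ₀max : ∀ δ : FreeGroup ι, δ.toWord <:+ α.toWord → δ.toWord <:+ β.toWord →
      δ.toWord.length ≤ γ₀.toWord.length)
    (hproper₁ : γ₀ ≠ α) (hproper₂ : γ₀ ≠ β)
    (hred : (β * α).toWord = β.toWord ++ α.toWord) :
    Nonempty ((Subgroup.closure ({α, β} : Set (FreeGroup ι))) ≃* FreeGroup (Fin 2)) :=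
  stmt14_general α β γ₀ hγ₀α hγ₀β hγ₀max hproper₁ hproper₂ hred
end

section
/- If an admissible path in a finitely separated graph (E, C) passes through some vertex v at least three times (counting occurrences of v as intermediate vertex, source, or range), then v admits a cycle, i.e. there is a closed path γ based at v with γγ admissible. -/
/-!
Three visits of `v` cut off two consecutive closed paths `γ₁`, `γ₂` at `v` with `γ₂γ₁`
admissible, so the turn at `v` from the end of `γ₁` into `γ₂` is allowed. The turn rules at a
vertex then force one of the other three turns (`γ₁ → γ₁`, `γ₂ → γ₂`, `γ₂ → γ₁`) to be allowed
as well, making `γ₁`, `γ₂` or `γ₂γ₁` a cycle at `v`.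
-/

namespace SepGraphStmt

variable {V E Λ : Type}

variable {V E Λ : Type} {G : SepGraph V E Λ} {v : V}

theorem exists_eq_append_cons_of_count_map_pos {α β : Type*} [DecidableEq β] (f : α → β)
    {b : β} {l : List α} (h : 0 < (l.map f).count b) :
    ∃ p x q, l = p ++ x :: q ∧ f x = b ∧ (q.map f).count b + 1 = (l.map f).count b := by
  induction l with
  | nil => simp at h
  | cons a t ih =>
    by_cases hab : f a = b
    · exact ⟨[], a, t, rfl, hab, by simp [hab]⟩
    · rw [List.map_cons, List.count_cons_of_ne hab] at h ⊢
      obtain ⟨p, x, q, rfl, hx, hq⟩ := ih h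
      exact ⟨a :: p, x, q, rfl, hx, hq⟩

theorem headIs_of_admissible_cons {x : Letter E} {w : List (Letter E)}
    (h : Admissible G (x :: w)) : headIs G w (rng G x) := by
  cases w with
  | nil => simp [headIs]
  | cons a t =>
    intro b hb
    obtain rfl : a = b := by simpa using hb
    exact (List.isChain_cons_cons.mp h).1.1

theorem isClosed_concat {p : List (Letter E)} {x : Letter E} (h : Admissible G (p ++ [x]))
    (hhead : headIs G (p ++ [x]) v) (hx : rng G x = v) : IsClosed G (p ++ [x]) v := by
  refine ⟨by simp, h, hhead, ?_⟩
  simpa [lastIs] using hx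

theorem IsClosed.exists_eq_head?_getLast? {γ : List (Letter E)} (h : IsClosed G γ v) :
    ∃ a b, γ.head? = some a ∧ γ.getLast? = some b ∧ src G a = v ∧ rng G b = v := by
  obtain ⟨hne, -, hhead, hlast⟩ := h
  obtain ⟨a, ha⟩ := Option.ne_none_iff_exists'.mp (List.head?_eq_none_iff.not.mpr hne)
  obtain ⟨b, hb⟩ := Option.ne_none_iff_exists'.mp (List.getLast?_eq_none_iff.not.mpr hne)
  exact ⟨a, b, ha, hb, hhead a ha, hlast b hb⟩

theorem IsClosed.cycleAt {γ : List (Letter E)} {a b : Letter E} (h : IsClosed G γ v)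
    (ha : γ.head? = some a) (hb : γ.getLast? = some b) (hba : ok G b a) : CycleAt G γ v := by
  refine ⟨⟨h.1, List.isChain_append.mpr ⟨h.2.1, h.2.1, ?_⟩⟩, h.2.2.1⟩
  rintro b' hb' a' ha'
  rw [hb, Option.mem_some_iff] at hb'
  rw [ha, Option.mem_some_iff] at ha'
  subst hb' ha'
  exact hba

theorem IsClosed.append {γ₁ γ₂ : List (Letter E)} (h₁ : IsClosed G γ₁ v) (h₂ : IsClosed G γ₂ v)
    (hadm : Admissible G (γ₁ ++ γ₂)) : IsClosed G (γ₁ ++ γ₂) v := by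
  refine ⟨by simp [h₁.1], hadm, ?_, ?_⟩
  · rw [headIs, List.head?_append_of_ne_nil _ h₁.1]
    exact h₁.2.2.1
  · rw [lastIs, List.getLast?_append_of_ne_nil _ h₂.1]
    exact h₂.2.2.2

/-- Whether a turn `b → a` is allowed depends on `b` only through its class: the edge of an
inverse letter, the colour of a forward one. If `b₁ → a₁` and `b₂ → a₁` were both forbidden,
`b₁` and `b₂` would lie in the same class, so `b₂ → a₂` would be allowed like `b₁ → a₂`. -/
theorem ok_or_ok_or_ok_of_ok {a₁ a₂ b₁ b₂ : Letter E} (ha₁ : src G a₁ = v) (hb₁ : rng G b₁ = v)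
    (hb₂ : rng G b₂ = v) (h : ok G b₁ a₂) :
    ok G b₁ a₁ ∨ ok G b₂ a₂ ∨ ok G b₂ a₁ := by
  by_contra! hc
  obtain ⟨n₁, n₂, n₃⟩ := hc
  obtain ⟨e₁, t₁⟩ := a₁; obtain ⟨e₂, t₂⟩ := a₂
  obtain ⟨f₁, u₁⟩ := b₁; obtain ⟨f₂, u₂⟩ := b₂
  have ha₂ : src G (e₂, t₂) = v := h.1.trans hb₁
  simp only [ok, ha₁, ha₂, hb₁, hb₂] at h n₁ n₂ n₃
  cases t₁ <;> cases t₂ <;> cases u₁ <;> cases u₂ <;> simp_all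

theorem exists_cycleAt_of_isClosed_append {γ₁ γ₂ : List (Letter E)} (h₁ : IsClosed G γ₁ v)
    (h₂ : IsClosed G γ₂ v) (hadm : Admissible G (γ₁ ++ γ₂)) : ∃ γ, CycleAt G γ v := by
  obtain ⟨a₁, b₁, ha₁, hb₁, hsrc₁, hrng₁⟩ := h₁.exists_eq_head?_getLast?
  obtain ⟨a₂, b₂, ha₂, hb₂, -, hrng₂⟩ := h₂.exists_eq_head?_getLast?
  have hturn : ok G b₁ a₂ := (List.isChain_append.mp hadm).2.2 b₁ hb₁ a₂ ha₂
  rcases ok_or_ok_or_ok_of_ok hsrc₁ hrng₁ hrng₂ hturn with h | h | h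
  · exact ⟨γ₁, h₁.cycleAt ha₁ hb₁ h⟩
  · exact ⟨γ₂, h₂.cycleAt ha₂ hb₂ h⟩
  · refine ⟨γ₁ ++ γ₂, (h₁.append h₂ hadm).cycleAt ?_ ?_ h⟩
    · rwa [List.head?_append_of_ne_nil _ h₁.1]
    · rwa [List.getLast?_append_of_ne_nil _ h₂.1]

theorem exists_isClosed_append_of_headIs [DecidableEq V] {w : List (Letter E)}
    (hw : Admissible G w) (hhead : headIs G w v) (hcount : 2 ≤ (w.map (rng G)).count v) :
    ∃ γ₁ γ₂, IsClosed G γ₁ v ∧ IsClosed G γ₂ v ∧ Admissible G (γ₁ ++ γ₂) := by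
  obtain ⟨p₁, x₁, q₁, rfl, hx₁, hq₁⟩ :=
    exists_eq_append_cons_of_count_map_pos (rng G) (l := w) (b := v) (by omega)
  obtain ⟨p₂, x₂, q₂, rfl, hx₂, -⟩ :=
    exists_eq_append_cons_of_count_map_pos (rng G) (l := q₁) (b := v) (by omega)
  have hw' : p₁ ++ x₁ :: (p₂ ++ x₂ :: q₂) = p₁ ++ [x₁] ++ (p₂ ++ [x₂]) ++ q₂ := by simp
  rw [hw'] at hw hhead
  have hadm : Admissible G (p₁ ++ [x₁] ++ (p₂ ++ [x₂])) := hw.prefix (List.prefix_append _ _)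
  refine ⟨_, _, isClosed_concat (hadm.prefix (List.prefix_append _ _)) ?_ hx₁,
    isClosed_concat (hadm.suffix (List.suffix_append _ _)) ?_ hx₂, hadm⟩
  · rwa [headIs, List.append_assoc, List.head?_append_of_ne_nil _ (by simp)] at hhead
  · rw [← hx₁]
    exact headIs_of_admissible_cons (hadm.infix ⟨p₁, [], by simp⟩)

/-- If an admissible path passes through a vertex `v` at least three times
(counting the source and the ranges of all its letters), then `v` admits a cycle. -/
theorem stmt17 {V E Λ : Type} [DecidableEq V] (G : SepGraph V E Λ)
    (w : List (Letter E)) (hw : Admissible G w) (v : V)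
    (hcount : 3 ≤ (w.head?.map (src G)).toList.count v + (w.map (rng G)).count v) :
    ∃ γ : List (Letter E), CycleAt G γ v := by
  suffices ∃ u, Admissible G u ∧ headIs G u v ∧ 2 ≤ (u.map (rng G)).count v by
    obtain ⟨u, hu, hhead, hcount⟩ := this
    obtain ⟨γ₁, γ₂, h₁, h₂, hadm⟩ := exists_isClosed_append_of_headIs hu hhead hcount
    exact exists_cycleAt_of_isClosed_append h₁ h₂ hadm
  cases w with
  | nil => simp at hcount
  | cons a t =>
    by_cases ha : src G a = v
    · refine ⟨a :: t, hw, by simpa [headIs] using ha, ?_⟩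
      simp only [List.head?_cons, Option.map_some, Option.toList_some, ha,
        List.count_singleton_self] at hcount
      omega
    · simp only [List.head?_cons, Option.map_some, Option.toList_some,
        List.count_singleton, beq_iff_eq, ha, if_false] at hcount
      obtain ⟨p, x, q, hpq, hx, hq⟩ :=
        exists_eq_append_cons_of_count_map_pos (rng G) (l := a :: t) (b := v) (by omega)
      have hxq : Admissible G (x :: q) := (hpq ▸ hw).suffix (List.suffix_append _ _)
      exact ⟨q, hxq.tail, hx ▸ headIs_of_admissible_cons hxq, by omega⟩

end SepGraphStmt
end
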